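/- Let P, Q be Laurent polynomials in z = e^{ix/2} with real coefficients such that deg(P) ≤ L, deg(Q) ≤ L, both P and Q have parity L mod 2, and |P(x)|² + |Q(x)|² = 1 for all real x. Then there exist real angles θ₀, θ₁, ..., θ_L such that the matrix [[P(x), -Q(x)], [Q*(x), P*(x)]] equals R_Y(θ₀) · ∏_{j=1}^{L} R_Z(x) R_Y(θ_j) for all real x. -/

import Mathlib

/-!
Write `z = e^{ix/2}` and `U = [[P, -Q], [Q*, P*]]`, so that `det U = |P|² + |Q|² = 1`.
For `L ≥ 1`, the functions `x ↦ z^n` are distinct characters of `ℝ`, hence linearly independent,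
so the coefficient of `z^{2L}` in `|P|² + |Q|²` vanishes: `p_L p_{-L} + q_L q_{-L} = 0`.
Hence some angle `θ` kills the top coefficient of `cos(θ/2) P + sin(θ/2) Q` and the bottom one of
`cos(θ/2) Q - sin(θ/2) P`, and then `U (R_Z(x) R_Y(θ))⁻¹` has the same shape and determinant, with
`P' = z (cos(θ/2) P + sin(θ/2) Q)` and `Q' = z⁻¹ (cos(θ/2) Q - sin(θ/2) P)`, which by parity are
of degree `L - 1` and parity `L - 1`. Peeling off one factor `R_Z R_Y` at a time ends at `L = 0`,
where `U = R_Y(θ₀)`.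
-/

open Complex Matrix

noncomputable def RZ (x : ℝ) : Matrix (Fin 2) (Fin 2) ℂ :=
  !![Complex.exp (-(Complex.I * x) / 2), 0; 0, Complex.exp (Complex.I * x / 2)]

noncomputable def RY (θ : ℝ) : Matrix (Fin 2) (Fin 2) ℂ :=
  !![(Real.cos (θ / 2) : ℂ), -(Real.sin (θ / 2) : ℂ);
     (Real.sin (θ / 2) : ℂ), (Real.cos (θ / 2) : ℂ)]

open ComplexConjugate

noncomputable def expHalf (n : ℤ) (x : ℝ) : ℂ := exp (I * n * x / 2)

lemma expHalf_add (m n : ℤ) (x : ℝ) : expHalf (m + n) x = expHalf m x * expHalf n x := by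
  rw [expHalf, expHalf, expHalf, ← exp_add]; push_cast; ring_nf

@[simp] lemma expHalf_zero (x : ℝ) : expHalf 0 x = 1 := by simp [expHalf]

lemma conj_expHalf (n : ℤ) (x : ℝ) : conj (expHalf n x) = expHalf (-n) x := by
  rw [expHalf, expHalf, ← exp_conj]
  simp only [map_div₀, map_mul, conj_I, conj_ofReal, map_intCast, map_ofNat]
  push_cast; ring_nf

lemma expHalf_mul_expHalf_neg (n : ℤ) (x : ℝ) : expHalf n x * expHalf (-n) x = 1 := by
  rw [← expHalf_add, add_neg_cancel, expHalf_zero]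

lemma RZ_eq (x : ℝ) : RZ x = !![expHalf (-1) x, 0; 0, expHalf 1 x] := by
  simp only [RZ, expHalf]; push_cast; ring_nf

noncomputable def expHalfChar (n : ℤ) : Multiplicative ℝ →* ℂ where
  toFun x := expHalf n x.toAdd
  map_one' := by simp [expHalf]
  map_mul' x y := by simp only [expHalf, toAdd_mul, ← exp_add]; push_cast; ring_nf

lemma expHalfChar_injective : Function.Injective expHalfChar := by
  intro m n h
  by_contra hmn
  have hne : (m : ℂ) - n ≠ 0 := by exact_mod_cast sub_ne_zero.mpr hmn
  set x : ℝ := 2 * Real.pi / (m - n : ℤ)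
  have hmn : expHalf m x = expHalf n x := DFunLike.congr_fun h (Multiplicative.ofAdd x)
  have hhalf : expHalf (m - n) x = -1 := by
    rw [expHalf, ← exp_pi_mul_I]; congr 1; simp only [x]; push_cast; field_simp
  have : expHalf n x = -expHalf n x :=
    calc expHalf n x = expHalf (m - n) x * expHalf n x := by
          rw [← expHalf_add, sub_add_cancel, hmn]
      _ = -expHalf n x := by rw [hhalf, neg_one_mul]
  exact exp_ne_zero _ (CharZero.eq_neg_self_iff.mp this)

lemma linearIndependent_expHalf : LinearIndependent ℂ expHalf :=
  (linearIndependent_monoidHom (Multiplicative ℝ) ℂ).comp expHalfChar expHalfChar_injective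

noncomputable def laurent (L : ℕ) (p : ℤ → ℝ) (x : ℝ) : ℂ :=
  ∑ n ∈ Finset.Icc (-(L : ℤ)) L, (p n : ℂ) * expHalf n x

lemma laurent_zero (p : ℤ → ℝ) (x : ℝ) : laurent 0 p x = p 0 := by
  simp [laurent]

lemma laurent_linearCombination (L : ℕ) (p q : ℤ → ℝ) (a b : ℝ) (x : ℝ) :
    laurent L (fun n => a * p n + b * q n) x = a * laurent L p x + b * laurent L q x := by
  simp only [laurent, Finset.mul_sum, ← Finset.sum_add_distrib]
  push_cast
  exact Finset.sum_congr rfl fun _ _ => by ring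

lemma laurent_mul_expHalf {L M : ℕ} {r : ℤ → ℝ} {k : ℤ}
    (hLM : Finset.Icc (-(L : ℤ)) L ⊆ Finset.Icc (-(M : ℤ) + k) (M + k))
    (hr : ∀ n ∈ Finset.Icc (-(M : ℤ)) M, n + k ∉ Finset.Icc (-(L : ℤ)) L → r n = 0) (x : ℝ) :
    laurent M r x * expHalf k x = laurent L (fun n => r (n - k)) x := by
  rw [laurent, laurent, Finset.sum_mul, Finset.sum_subset hLM, ← Finset.map_add_right_Icc,
    Finset.sum_map]
  · exact Finset.sum_congr rfl fun n _ => by simp [expHalf_add, mul_assoc]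
  · intro m hm hmL
    have hmk : m - k ∈ Finset.Icc (-(M : ℤ)) M := by
      simp only [Finset.mem_Icc] at hm ⊢; omega
    simp [hr (m - k) hmk (by simpa using hmL)]

lemma laurent_mul_conj (L : ℕ) (p : ℤ → ℝ) (x : ℝ) :
    laurent L p x * conj (laurent L p x) =
      ∑ u ∈ Finset.Icc (-(L : ℤ)) L ×ˢ Finset.Icc (-(L : ℤ)) L,
        ((p u.1 * p u.2 : ℝ) : ℂ) * expHalf (u.1 - u.2) x := by
  rw [laurent, map_sum, Finset.sum_mul_sum, ← Finset.sum_product']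
  refine Finset.sum_congr rfl fun u _ => ?_
  rw [map_mul, conj_ofReal, conj_expHalf, sub_eq_add_neg, expHalf_add]
  push_cast; ring

lemma extreme_coeffs_orthogonal {M : ℕ} (hM : M ≠ 0) {p q : ℤ → ℝ}
    (h : ∀ x, ‖laurent M p x‖ ^ 2 + ‖laurent M q x‖ ^ 2 = 1) :
    p M * p (-M) + q M * q (-M) = 0 := by
  set S := Finset.Icc (-(M : ℤ)) M ×ˢ Finset.Icc (-(M : ℤ)) M
  have hsum : ∀ x,
      ∑ u ∈ S, ((p u.1 * p u.2 + q u.1 * q u.2 : ℝ) : ℂ) * expHalf (u.1 - u.2) x = 1 := by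
    intro x
    have hx := congrArg (fun t : ℝ => (t : ℂ)) (h x)
    simp only [ofReal_add, ofReal_pow, ← mul_conj', laurent_mul_conj, ofReal_one] at hx
    rw [← hx, ← Finset.sum_add_distrib]
    exact Finset.sum_congr rfl fun _ _ => by push_cast; ring
  let f : ℤ →₀ ℂ := ∑ u ∈ S, Finsupp.single (u.1 - u.2) ((p u.1 * p u.2 + q u.1 * q u.2 : ℝ) : ℂ)
    - Finsupp.single 0 1
  have hf : Finsupp.linearCombination ℂ expHalf f = 0 := by
    funext x
    simp only [f, map_sub, map_sum, Finsupp.linearCombination_single, Pi.sub_apply,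
      Finset.sum_apply, Pi.smul_apply, smul_eq_mul, expHalf_zero, one_mul, hsum, sub_self,
      Pi.zero_apply]
  have := DFunLike.congr_fun (linearIndependent_iff.mp linearIndependent_expHalf f hf)
    (2 * M : ℤ)
  -- only `(M, -M)` contributes to the coefficient of `z^{2M}`
  rw [Finsupp.sub_apply, Finsupp.finsetSum_apply,
    Finset.sum_eq_single ((M : ℤ), -(M : ℤ))] at this
  · have htop : ((p M * p (-M) + q M * q (-M) : ℝ) : ℂ) = 0 := by
      simpa [Finsupp.single_apply, two_mul, hM] using this
    exact_mod_cast htop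
  · intro u hu hne
    rw [Finsupp.single_apply, if_neg]
    simp only [S, Finset.mem_product, Finset.mem_Icc] at hu
    contrapose! hne
    ext <;> omega
  · simp [S]

def qspMatrix (P Q : ℂ) : Matrix (Fin 2) (Fin 2) ℂ := !![P, -Q; conj Q, conj P]

lemma det_qspMatrix (P Q : ℂ) : (qspMatrix P Q).det = ((‖P‖ ^ 2 + ‖Q‖ ^ 2 : ℝ) : ℂ) := by
  rw [qspMatrix, det_fin_two_of, neg_mul, sub_neg_eq_add, mul_conj', mul_conj']
  push_cast; ring

lemma det_RZ_mul_RY (x θ : ℝ) : (RZ x * RY θ).det = 1 := by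
  rw [det_mul, RZ_eq, RY, det_fin_two_of, det_fin_two_of, mul_comm (expHalf (-1) x),
    expHalf_mul_expHalf_neg]
  have hcs : (Real.cos (θ / 2) : ℂ) ^ 2 + (Real.sin (θ / 2) : ℂ) ^ 2 = 1 := by
    exact_mod_cast Real.cos_sq_add_sin_sq (θ / 2)
  linear_combination hcs

lemma norm_sq_add_norm_sq_eq_of_qspMatrix_eq {P Q P' Q' : ℂ} {x θ : ℝ}
    (h : qspMatrix P Q = qspMatrix P' Q' * (RZ x * RY θ)) :
    ‖P'‖ ^ 2 + ‖Q'‖ ^ 2 = ‖P‖ ^ 2 + ‖Q‖ ^ 2 := by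
  have := congrArg det h
  rw [det_mul, det_RZ_mul_RY, mul_one, det_qspMatrix, det_qspMatrix] at this
  exact_mod_cast this.symm

lemma qspMatrix_eq_mul_RZ_mul_RY (P Q : ℂ) (x θ : ℝ) :
    qspMatrix P Q =
      qspMatrix ((Real.cos (θ / 2) * P + Real.sin (θ / 2) * Q) * expHalf 1 x)
        ((Real.cos (θ / 2) * Q - Real.sin (θ / 2) * P) * expHalf (-1) x) * (RZ x * RY θ) := by
  have he := expHalf_mul_expHalf_neg 1 x
  have hcs := Real.cos_sq_add_sin_sq (θ / 2)
  rw [RZ_eq, RY]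
  generalize Real.cos (θ / 2) = c, Real.sin (θ / 2) = s at hcs ⊢
  have hcs' : (c : ℂ) ^ 2 + (s : ℂ) ^ 2 = 1 := by exact_mod_cast hcs
  ext i j
  fin_cases i <;> fin_cases j <;>
    simp [qspMatrix, mul_apply, Fin.sum_univ_two, conj_expHalf]
  · linear_combination (-((c : ℂ) ^ 2 + s ^ 2) * P) * he - P * hcs'
  · linear_combination (((c : ℂ) ^ 2 + s ^ 2) * Q) * he + Q * hcs'
  · linear_combination (-((c : ℂ) ^ 2 + s ^ 2) * conj Q) * he - conj Q * hcs'
  · linear_combination (-((c : ℂ) ^ 2 + s ^ 2) * conj P) * he - conj P * hcs'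

lemma exists_cos_sin_eq {c s : ℝ} (h : c ^ 2 + s ^ 2 = 1) :
    ∃ θ : ℝ, Real.cos (θ / 2) = c ∧ Real.sin (θ / 2) = s := by
  have hnorm : ‖(⟨c, s⟩ : ℂ)‖ = 1 := by
    rw [norm_def, normSq_mk, ← sq, ← sq, h, Real.sqrt_one]
  have hne : (⟨c, s⟩ : ℂ) ≠ 0 := by rintro h0; simp [h0] at hnorm
  refine ⟨2 * arg ⟨c, s⟩, ?_, ?_⟩
  · rw [mul_div_cancel_left₀ _ two_ne_zero, cos_arg hne, hnorm, div_one]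
  · rw [mul_div_cancel_left₀ _ two_ne_zero, sin_arg, hnorm, div_one]

lemma exists_unit_orthogonal (a b : ℝ) :
    ∃ c s : ℝ, c ^ 2 + s ^ 2 = 1 ∧ c * a + s * b = 0 := by
  by_cases hab : a = 0 ∧ b = 0
  · exact ⟨1, 0, by norm_num, by simp [hab.1]⟩
  · have hpos : 0 < a ^ 2 + b ^ 2 := by
      rcases not_and_or.mp hab with h | h <;> positivity
    have hr := Real.sq_sqrt hpos.le
    have hr0 := (Real.sqrt_pos.mpr hpos).ne'
    refine ⟨-b / √(a ^ 2 + b ^ 2), a / √(a ^ 2 + b ^ 2), ?_, ?_⟩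
    · field_simp; linarith
    · field_simp; ring

lemma exists_angle_orthogonal {a b a' b' : ℝ} (h : a * a' + b * b' = 0) :
    ∃ θ : ℝ, Real.cos (θ / 2) * a + Real.sin (θ / 2) * b = 0 ∧
      Real.cos (θ / 2) * b' - Real.sin (θ / 2) * a' = 0 := by
  suffices ∃ c s : ℝ, c ^ 2 + s ^ 2 = 1 ∧ c * a + s * b = 0 ∧ c * b' - s * a' = 0 by
    obtain ⟨c, s, hcs, h₁, h₂⟩ := this
    obtain ⟨θ, rfl, rfl⟩ := exists_cos_sin_eq hcs
    exact ⟨θ, h₁, h₂⟩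
  by_cases hab : a = 0 ∧ b = 0
  · obtain ⟨c, s, hcs, h₂⟩ := exists_unit_orthogonal b' (-a')
    exact ⟨c, s, hcs, by simp [hab.1, hab.2], by linarith⟩
  · obtain ⟨c, s, hcs, h₁⟩ := exists_unit_orthogonal a b
    refine ⟨c, s, hcs, h₁, ?_⟩
    -- in `ℝ²`, two vectors orthogonal to the nonzero `(a, b)` are parallel
    have ha : a * (c * b' - s * a') = 0 := by linear_combination b' * h₁ - s * h
    have hb : b * (c * b' - s * a') = 0 := by linear_combination c * h - a' * h₁
    rcases not_and_or.mp hab with ha0 | hb0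
    · exact (mul_eq_zero.mp ha).resolve_left ha0
    · exact (mul_eq_zero.mp hb).resolve_left hb0

def HasParity (L : ℕ) (p : ℤ → ℝ) : Prop := ∀ n : ℤ, n % 2 ≠ (L : ℤ) % 2 → p n = 0

lemma HasParity.linearCombination {L : ℕ} {p q : ℤ → ℝ} (hp : HasParity L p)
    (hq : HasParity L q) (a b : ℝ) : HasParity L (fun n => a * p n + b * q n) := by
  intro n hn
  simp [hp n hn, hq n hn]

lemma exists_qspMatrix_eq_mul_RZ_mul_RY {L : ℕ} {p q : ℤ → ℝ} (hp : HasParity (L + 1) p)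
    (hq : HasParity (L + 1) q)
    (hnorm : ∀ x, ‖laurent (L + 1) p x‖ ^ 2 + ‖laurent (L + 1) q x‖ ^ 2 = 1) :
    ∃ (θ : ℝ) (p' q' : ℤ → ℝ), HasParity L p' ∧ HasParity L q' ∧ ∀ x,
      qspMatrix (laurent (L + 1) p x) (laurent (L + 1) q x) =
        qspMatrix (laurent L p' x) (laurent L q' x) * (RZ x * RY θ) := by
  have horth := extreme_coeffs_orthogonal L.succ_ne_zero hnorm
  push_cast at horth
  obtain ⟨θ, htop, hbot⟩ := exists_angle_orthogonal horth
  set c := Real.cos (θ / 2)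
  set s := Real.sin (θ / 2)
  set r := fun n => c * p n + s * q n
  set r' := fun n => c * q n + (-s) * p n
  have hr : HasParity (L + 1) r := hp.linearCombination hq c s
  have hr' : HasParity (L + 1) r' := hq.linearCombination hp c (-s)
  -- `r` and `r'` lose their coefficients at `±(L + 1)` by the choice of `θ`, and at `±L` by parity
  have hP : ∀ x, laurent (L + 1) r x * expHalf 1 x = laurent L (fun n => r (n - 1)) x := by
    refine laurent_mul_expHalf (Finset.Icc_subset_Icc (by omega) (by omega)) fun n hn hnL => ?_
    simp only [Finset.mem_Icc] at hn hnL
    push_cast at hn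
    obtain rfl | rfl : n = L ∨ n = L + 1 := by omega
    · exact hr _ (by push_cast; omega)
    · exact htop
  have hQ : ∀ x, laurent (L + 1) r' x * expHalf (-1) x = laurent L (fun n => r' (n - -1)) x := by
    refine laurent_mul_expHalf (Finset.Icc_subset_Icc (by omega) (by omega)) fun n hn hnL => ?_
    simp only [Finset.mem_Icc] at hn hnL
    push_cast at hn
    obtain rfl | rfl : n = -L ∨ n = -(L + 1) := by omega
    · exact hr' _ (by push_cast; omega)
    · simp only [r']; linarith
  refine ⟨θ, fun n => r (n - 1), fun n => r' (n - -1), fun n hn => hr _ (by push_cast; omega),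
    fun n hn => hr' _ (by push_cast; omega), fun x => ?_⟩
  rw [qspMatrix_eq_mul_RZ_mul_RY _ _ x θ, ← hP, ← hQ, laurent_linearCombination,
    laurent_linearCombination, ofReal_neg]
  congr 2; ring

theorem exists_angles_of_hasParity (L : ℕ) {p q : ℤ → ℝ} (hp : HasParity L p)
    (hq : HasParity L q) (hnorm : ∀ x, ‖laurent L p x‖ ^ 2 + ‖laurent L q x‖ ^ 2 = 1) :
    ∃ θ : Fin (L + 1) → ℝ, ∀ x, qspMatrix (laurent L p x) (laurent L q x) =
      RY (θ 0) * (List.ofFn fun j : Fin L => RZ x * RY (θ j.succ)).prod := by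
  induction L generalizing p q with
  | zero =>
    have h0 : p 0 ^ 2 + q 0 ^ 2 = 1 := by simpa [laurent_zero] using hnorm 0
    obtain ⟨θ, hc, hs⟩ := exists_cos_sin_eq h0
    refine ⟨fun _ => θ, fun x => ?_⟩
    simp [laurent_zero, qspMatrix, RY, hc, hs]
  | succ L ih =>
    obtain ⟨θ, p', q', hp', hq', hpeel⟩ := exists_qspMatrix_eq_mul_RZ_mul_RY hp hq hnorm
    obtain ⟨φ, hφ⟩ := ih hp' hq' fun x =>
      (norm_sq_add_norm_sq_eq_of_qspMatrix_eq (hpeel x)).trans (hnorm x)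
    refine ⟨Fin.snoc φ θ, fun x => ?_⟩
    rw [hpeel x, hφ x, List.ofFn_succ', List.prod_concat, mul_assoc]
    simp [Fin.succ_castSucc, -Fin.castSucc_succ]

theorem stmt1_general (L : ℕ) (p q : ℤ → ℝ) (P Q : ℝ → ℂ)
    (hP : ∀ x : ℝ, P x = ∑ n ∈ Finset.Icc (-(L : ℤ)) (L : ℤ),
        (p n : ℂ) * Complex.exp (Complex.I * (n : ℂ) * (x : ℂ) / 2))
    (hQ : ∀ x : ℝ, Q x = ∑ n ∈ Finset.Icc (-(L : ℤ)) (L : ℤ),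
        (q n : ℂ) * Complex.exp (Complex.I * (n : ℂ) * (x : ℂ) / 2))
    (hppar : ∀ n : ℤ, n % 2 ≠ (L : ℤ) % 2 → p n = 0)
    (hqpar : ∀ n : ℤ, n % 2 ≠ (L : ℤ) % 2 → q n = 0)
    (hnorm : ∀ x : ℝ, ‖P x‖ ^ 2 + ‖Q x‖ ^ 2 = 1) :
    ∃ θ : Fin (L + 1) → ℝ, ∀ x : ℝ,
      !![P x, -Q x; (starRingEnd ℂ) (Q x), (starRingEnd ℂ) (P x)] =
      RY (θ 0) * (List.ofFn fun j : Fin L => RZ x * RY (θ j.succ)).prod := by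
  obtain rfl : P = laurent L p := funext hP
  obtain rfl : Q = laurent L q := funext hQ
  exact exists_angles_of_hasParity L hppar hqpar hnorm

/-- if real-coefficient Laurent polynomials `P, Q` in `e^{ix/2}` have degree at
most `L`, parity `L mod 2`, and satisfy `|P|² + |Q|² = 1` on ℝ, then `[[P, -Q],[Q*, P*]]`
equals a QNN `R_Y(θ₀) ∏_{j=1}^L R_Z(x) R_Y(θ_j)`. -/
theorem stmt1 (L : ℕ) (p q : ℤ → ℝ) (P Q : ℝ → ℂ)
    (hP : ∀ x : ℝ, P x = ∑ n ∈ Finset.Icc (-(L : ℤ)) (L : ℤ),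
        (p n : ℂ) * Complex.exp (Complex.I * (n : ℂ) * (x : ℂ) / 2))
    (hQ : ∀ x : ℝ, Q x = ∑ n ∈ Finset.Icc (-(L : ℤ)) (L : ℤ),
        (q n : ℂ) * Complex.exp (Complex.I * (n : ℂ) * (x : ℂ) / 2))
    (hpdeg : ∀ n : ℤ, (L : ℤ) < |n| → p n = 0)
    (hqdeg : ∀ n : ℤ, (L : ℤ) < |n| → q n = 0)
    (hppar : ∀ n : ℤ, n % 2 ≠ (L : ℤ) % 2 → p n = 0)
    (hqpar : ∀ n : ℤ, n % 2 ≠ (L : ℤ) % 2 → q n = 0)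
    (hnorm : ∀ x : ℝ, ‖P x‖ ^ 2 + ‖Q x‖ ^ 2 = 1) :
    ∃ θ : Fin (L + 1) → ℝ, ∀ x : ℝ,
      !![P x, -Q x; (starRingEnd ℂ) (Q x), (starRingEnd ℂ) (P x)] =
      RY (θ 0) * (List.ofFn fun j : Fin L => RZ x * RY (θ j.succ)).prod :=
  stmt1_general L p q P Q hP hQ hppar hqpar hnorm
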